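/- For a cellularly embedded toroidal graph of order 3 (3 vertices, 6 edges, 3 faces, loopless), the Euler property implies the Angle property. -/

import Mathlib

/-- A combinatorial model of a connected loopless multigraph, cellularly embedded in the
torus, with `r` vertices, `2r` edges and `r` faces.  The embedding is recorded through
its facial walks: face `f` has a closed boundary walk of length `len f`, whose `i`-th
vertex is `wv f i` and `i`-th edge is `we f i` (indices taken cyclically), the edge
`we f i` joining `wv f i` to `wv f (i+1)`.  Every edge is traversed exactly twice in
total by the facial walks. -/
structure TorusGraph (r : ℕ) (V E F : Type) [Fintype V] [Fintype E] [Fintype F]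
    [DecidableEq V] [DecidableEq E] [DecidableEq F] where
  ends : E → Sym2 V
  len : F → ℕ
  len_pos : ∀ f, 0 < len f
  wv : F → ℕ → V
  we : F → ℕ → E
  wv_periodic : ∀ f i, wv f (i + len f) = wv f i
  we_periodic : ∀ f i, we f (i + len f) = we f i
  walk_ends : ∀ f i, ends (we f i) = s(wv f i, wv f (i + 1))
  loopless : ∀ e, ¬ (ends e).IsDiag
  card_V : Fintype.card V = r
  card_E : Fintype.card E = 2 * r
  card_F : Fintype.card F = r
  edge_twice : ∀ e : E,
    ∑ f : F, ((Finset.range (len f)).filter (fun i => we f i = e)).card = 2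
  connected : (SimpleGraph.fromRel (fun u v => ∃ e, ends e = s(u, v))).Connected

namespace TorusGraph

variable {r : ℕ} {V E F : Type} [Fintype V] [Fintype E] [Fintype F]
    [DecidableEq V] [DecidableEq E] [DecidableEq F]

/-- The set of vertices on the boundary of face `f`. -/
def faceVerts (G : TorusGraph r V E F) (f : F) : Finset V :=
  (Finset.range (G.len f)).image (G.wv f)

/-- `V(G(J))`: the vertices of the subgraph generated by the faces in `J`. -/
def VJ (G : TorusGraph r V E F) (J : Finset F) : Finset V :=
  J.biUnion G.faceVerts

/-- `Int G(J)`: vertices incident only with faces labelled by `J`. -/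
def IntJ (G : TorusGraph r V E F) (J : Finset F) : Finset V :=
  (G.VJ J).filter (fun v => ∀ f : F, v ∈ G.faceVerts f → f ∈ J)

/-- The **Angle property**: there are positive weights on the corners
(positions of the facial walks) summing to `1` within each face and to `1`
around each vertex. -/
def AngleProp (G : TorusGraph r V E F) : Prop :=
  ∃ ω : F → ℕ → ℝ,
    (∀ f, ∀ i ∈ Finset.range (G.len f), 0 < ω f i) ∧
    (∀ f, ∑ i ∈ Finset.range (G.len f), ω f i = 1) ∧
    (∀ v : V, ∑ f : F,
        ∑ i ∈ (Finset.range (G.len f)).filter (fun i => G.wv f i = v), ω f i = 1)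

/-- The **Euler property**: every facial walk traverses each boundary edge
exactly once (it is an Euler trail of the boundary subgraph). -/
def EulerProp (G : TorusGraph r V E F) : Prop :=
  ∀ f, ∀ i < G.len f, ∀ j < G.len f, G.we f i = G.we f j → i = j

end TorusGraph

/-!
Under the Euler property every edge lies on two distinct faces, so every vertex lies on at
least two of the three faces; together with looplessness this gives the strict Hall condition
`|J| < |V(G(J))|` for every nonempty proper set `J` of faces.  Strict Hall's condition makes
every face–vertex incidence part of a perfect matching of faces to vertices.  Averaging the
permutation matrices of all these matchings gives a doubly stochastic face–vertex matrix whose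
support is exactly the incidence relation, and splitting each entry equally among the
corresponding corners yields the angle weights.
-/

open Finset

section Transversal

variable {F V : Type*} [DecidableEq V]

theorem exists_equiv_apply_eq_of_card_lt_card_biUnion [Fintype F] [Fintype V] [DecidableEq F]
    (N : F → Finset V)
    (hcard : Fintype.card F = Fintype.card V)
    (hN : ∀ J : Finset F, J.Nonempty → J ≠ univ → #J < #(J.biUnion N))
    {f : F} {v : V} (hv : v ∈ N f) :
    ∃ σ : F ≃ V, (∀ g, σ g ∈ N g) ∧ σ f = v := by
  -- Strict Hall for `N` leaves Hall's condition after deleting `f` and `v`.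
  let t : {g // g ≠ f} → Finset V := fun g => (N g).erase v
  have hall : ∀ s : Finset {g // g ≠ f}, #s ≤ #(s.biUnion t) := by
    intro s
    rcases s.eq_empty_or_nonempty with rfl | hs
    · simp
    let J := s.map (Function.Embedding.subtype _)
    have hJ : J ≠ univ := fun h => by
      obtain ⟨g, -, hg⟩ := mem_map.1 (h ▸ mem_univ f : f ∈ J)
      exact g.2 hg
    have hsub : J.biUnion N ⊆ insert v (s.biUnion t) := by
      intro w hw
      obtain ⟨g, hg, hwg⟩ := mem_biUnion.1 hw
      obtain ⟨g, hgs, rfl⟩ := mem_map.1 hg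
      by_cases hwv : w = v
      · exact hwv ▸ mem_insert_self _ _
      · exact mem_insert_of_mem (mem_biUnion.2 ⟨g, hgs, mem_erase.2 ⟨hwv, hwg⟩⟩)
    refine Nat.lt_succ_iff.1 ?_
    calc #s = #J := (card_map _).symm
      _ < #(J.biUnion N) := hN J hs.map hJ
      _ ≤ #(s.biUnion t) + 1 := (card_le_card hsub).trans (card_insert_le _ _)
  obtain ⟨τ, hτinj, hτ⟩ := (all_card_le_biUnion_card_iff_exists_injective t).1 hall
  let σ : F → V := fun g => if hg : g = f then v else τ ⟨g, hg⟩
  have hσ : ∀ g, σ g ∈ N g := fun g => by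
    by_cases hg : g = f
    · simp only [σ, dif_pos hg]; exact hg ▸ hv
    · simp only [σ, dif_neg hg]; exact mem_of_mem_erase (hτ ⟨g, hg⟩)
  have hσinj : σ.Injective := by
    have hτv : ∀ g, τ g ≠ v := fun g => ne_of_mem_erase (hτ g)
    intro g g' h
    by_cases hg : g = f <;> by_cases hg' : g' = f <;> simp only [σ, hg, hg', dite_true,
      dite_false] at h
    · exact hg.trans hg'.symm
    · exact absurd h.symm (hτv _)
    · exact absurd h (hτv _)
    · exact congrArg Subtype.val (hτinj h)
  exact ⟨.ofBijective σ ((Fintype.bijective_iff_injective_and_card σ).2 ⟨hσinj, hcard⟩), hσ,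
    dif_pos rfl⟩

lemma Finset.sum_card_filter_div_card {ι α : Type*} [Fintype α] [DecidableEq α]
    {S : Finset ι} (hS : S.Nonempty) (g : ι → α) :
    ∑ a, (#{x ∈ S | g x = a} : ℝ) / #S = 1 := by
  rw [← sum_div, div_eq_one_iff_eq (by exact_mod_cast hS.card_ne_zero)]
  exact_mod_cast (card_eq_sum_card_fiberwise (fun x _ => mem_univ (g x))).symm

noncomputable def equivAverage (S : Finset (F ≃ V)) (f : F) (v : V) : ℝ :=
  #{σ ∈ S | σ f = v} / #S

variable {S : Finset (F ≃ V)}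

lemma equivAverage_pos {σ : F ≃ V} (hσ : σ ∈ S) (f : F) : 0 < equivAverage S f (σ f) :=
  div_pos (Nat.cast_pos.2 (card_pos.2 ⟨σ, mem_filter.2 ⟨hσ, rfl⟩⟩))
    (Nat.cast_pos.2 (card_pos.2 ⟨σ, hσ⟩))

lemma equivAverage_eq_zero {f : F} {v : V} (h : ∀ σ ∈ S, σ f ≠ v) : equivAverage S f v = 0 := by
  simp [equivAverage, filter_false_of_mem h]

lemma sum_equivAverage_right [Fintype V] (hS : S.Nonempty) (f : F) : ∑ v, equivAverage S f v = 1 :=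
  sum_card_filter_div_card hS (fun σ => σ f)

lemma sum_equivAverage_left [Fintype F] [DecidableEq F] (hS : S.Nonempty) (v : V) :
    ∑ f, equivAverage S f v = 1 := by
  have hfiber : ∀ f, ({σ ∈ S | σ f = v} : Finset _) = {σ ∈ S | σ.symm v = f} := fun f =>
    filter_congr fun σ _ => by rw [Equiv.symm_apply_eq, eq_comm]
  simp only [equivAverage, hfiber]
  exact sum_card_filter_div_card hS (fun σ => σ.symm v)

end Transversal

namespace TorusGraph

variable {r : ℕ} {V E F : Type} [Fintype V] [Fintype E] [Fintype F]
    [DecidableEq V] [DecidableEq E] [DecidableEq F] (G : TorusGraph r V E F)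

def corners (f : F) (v : V) : Finset ℕ := {i ∈ range (G.len f) | G.wv f i = v}

lemma wv_mem_faceVerts (f : F) (i : ℕ) : G.wv f i ∈ G.faceVerts f :=
  mem_image.2 ⟨i % G.len f, mem_range.2 (Nat.mod_lt _ (G.len_pos f)),
    Function.Periodic.map_mod_nat (G.wv_periodic f) i⟩

lemma corners_nonempty_iff {f : F} {v : V} : (G.corners f v).Nonempty ↔ v ∈ G.faceVerts f := by
  simp [corners, faceVerts, filter_nonempty_iff]

theorem angleProp_of_doublyStochastic (D : F → V → ℝ)
    (hpos : ∀ f v, v ∈ G.faceVerts f → 0 < D f v) (hzero : ∀ f v, v ∉ G.faceVerts f → D f v = 0)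
    (hrow : ∀ f, ∑ v, D f v = 1) (hcol : ∀ v, ∑ f, D f v = 1) : G.AngleProp := by
  let ω : F → ℕ → ℝ := fun f i => D f (G.wv f i) / #(G.corners f (G.wv f i))
  have hcorners : ∀ f v, ∑ i ∈ G.corners f v, ω f i = D f v := by
    intro f v
    rw [sum_congr rfl fun i hi => show ω f i = D f v / #(G.corners f v) by
      simp only [ω, (mem_filter.1 hi).2], sum_const, nsmul_eq_mul]
    by_cases hv : v ∈ G.faceVerts f
    · exact mul_div_cancel₀ _ (by exact_mod_cast ((G.corners_nonempty_iff).2 hv).card_ne_zero)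
    · simp [hzero f v hv]
  refine ⟨ω, fun f i hi => div_pos (hpos _ _ (G.wv_mem_faceVerts f i)) ?_, fun f => ?_,
    fun v => ?_⟩
  · exact Nat.cast_pos.2 (card_pos.2 ⟨i, mem_filter.2 ⟨hi, rfl⟩⟩)
  · rw [← sum_fiberwise _ (G.wv f)]
    exact (sum_congr rfl fun v _ => hcorners f v).trans (hrow f)
  · exact (sum_congr rfl fun f _ => hcorners f v).trans (hcol v)

theorem angleProp_of_card_lt_card_VJ
    (hG : ∀ J : Finset F, J.Nonempty → J ≠ univ → #J < #(G.VJ J)) : G.AngleProp := by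
  have hcard : Fintype.card F = Fintype.card V := G.card_F.trans G.card_V.symm
  have hmatch : ∀ {f v}, v ∈ G.faceVerts f → ∃ σ : F ≃ V, (∀ g, σ g ∈ G.faceVerts g) ∧ σ f = v :=
    exists_equiv_apply_eq_of_card_lt_card_biUnion G.faceVerts hcard hG
  let S : Finset (F ≃ V) := {σ | ∀ g, σ g ∈ G.faceVerts g}
  have hS : Nonempty F → S.Nonempty := fun ⟨f⟩ => by
    obtain ⟨σ, hσ, -⟩ := hmatch (G.wv_mem_faceVerts f 0)
    exact ⟨σ, mem_filter.2 ⟨mem_univ _, hσ⟩⟩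
  have hF : V → Nonempty F := fun v => Fintype.card_pos_iff.1 (hcard ▸ Fintype.card_pos_iff.2 ⟨v⟩)
  refine G.angleProp_of_doublyStochastic (equivAverage S) (fun f v hv => ?_)
    (fun f v hv => equivAverage_eq_zero fun σ hσ hσf => hv (hσf ▸ (mem_filter.1 hσ).2 f))
    (fun f => sum_equivAverage_right (hS ⟨f⟩) f)
    (fun v => sum_equivAverage_left (hS (hF v)) v)
  obtain ⟨σ, hσ, rfl⟩ := hmatch hv
  exact equivAverage_pos (mem_filter.2 ⟨mem_univ _, hσ⟩) f

lemma one_lt_card_faceVerts (f : F) : 1 < #(G.faceVerts f) := by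
  have hne : G.wv f 0 ≠ G.wv f 1 := by
    simpa [G.walk_ends, Sym2.mk_isDiag_iff] using G.loopless (G.we f 0)
  exact one_lt_card.2 ⟨_, G.wv_mem_faceVerts f 0, _, G.wv_mem_faceVerts f 1, hne⟩

lemma mem_faceVerts_of_mem_ends {f : F} {i : ℕ} {v : V} (hv : v ∈ G.ends (G.we f i)) :
    v ∈ G.faceVerts f := by
  rw [G.walk_ends, Sym2.mem_iff] at hv
  rcases hv with rfl | rfl
  exacts [G.wv_mem_faceVerts f i, G.wv_mem_faceVerts f (i + 1)]

lemma exists_mem_ends (hr : 1 < r) (v : V) : ∃ e, v ∈ G.ends e := by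
  have : Nontrivial V := Fintype.one_lt_card_iff_nontrivial.1 (G.card_V ▸ hr)
  obtain ⟨w, hvw⟩ := G.connected.preconnected.exists_adj_of_nontrivial v
  rcases ((SimpleGraph.fromRel_adj _ _ _).1 hvw).2 with ⟨e, he⟩ | ⟨e, he⟩
  exacts [⟨e, he ▸ Sym2.mem_mk_left _ _⟩, ⟨e, he ▸ Sym2.mem_mk_right _ _⟩]

namespace EulerProp

variable {G}

lemma two_le_card_faces_traversing (hE : G.EulerProp) (e : E) :
    2 ≤ #{f | ∃ i < G.len f, G.we f i = e} := by
  have hle : ∀ f, #{i ∈ range (G.len f) | G.we f i = e} ≤ 1 := fun f =>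
    card_le_one.2 fun i hi j hj => by
      rw [mem_filter, mem_range] at hi hj
      exact hE f i hi.1 j hj.1 (hi.2.trans hj.2.symm)
  calc 2 = ∑ f, #{i ∈ range (G.len f) | G.we f i = e} := (G.edge_twice e).symm
    _ = ∑ f with ∃ i < G.len f, G.we f i = e, #{i ∈ range (G.len f) | G.we f i = e} := by
      refine (sum_filter_of_ne fun f _ hf => ?_).symm
      obtain ⟨i, hi⟩ := card_ne_zero.1 hf
      rw [mem_filter, mem_range] at hi
      exact ⟨i, hi⟩
    _ ≤ ∑ f with ∃ i < G.len f, G.we f i = e, 1 := sum_le_sum fun f _ => hle f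
    _ = _ := (card_eq_sum_ones _).symm

lemma two_le_card_faces_mem (hE : G.EulerProp) (hr : 1 < r) (v : V) :
    2 ≤ #{f | v ∈ G.faceVerts f} := by
  obtain ⟨e, he⟩ := G.exists_mem_ends hr v
  refine (hE.two_le_card_faces_traversing e).trans (card_le_card fun f hf => ?_)
  obtain ⟨i, -, rfl⟩ := (mem_filter.1 hf).2
  exact mem_filter.2 ⟨mem_univ f, G.mem_faceVerts_of_mem_ends he⟩

lemma faceVerts_union_eq_univ {G : TorusGraph 3 V E F} (hE : G.EulerProp) {f₁ f₂ : F}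
    (h : f₁ ≠ f₂) : G.faceVerts f₁ ∪ G.faceVerts f₂ = univ := by
  refine eq_univ_of_forall fun v => by_contra fun hv => ?_
  have hsub : ({f | v ∈ G.faceVerts f} : Finset F) ⊆ ({f₁, f₂} : Finset F)ᶜ := fun f hf => by
    aesop
  have := (hE.two_le_card_faces_mem (by norm_num) v).trans (card_le_card hsub)
  rw [card_compl, card_pair h, G.card_F] at this
  omega

lemma card_lt_card_VJ {G : TorusGraph 3 V E F} (hE : G.EulerProp) {J : Finset F}
    (hne : J.Nonempty) (hJ : J ≠ univ) : #J < #(G.VJ J) := by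
  have hlt : #J < 3 := G.card_F ▸ (card_lt_iff_ne_univ J).2 hJ
  have hpos := hne.card_pos
  interval_cases h : #J
  · obtain ⟨f, rfl⟩ := card_eq_one.1 h
    simpa [VJ] using G.one_lt_card_faceVerts f
  · obtain ⟨f₁, f₂, h12, rfl⟩ := card_eq_two.1 h
    simp [VJ, hE.faceVerts_union_eq_univ h12, G.card_V]

end EulerProp

end TorusGraph

open TorusGraph in
/-- For a cellularly embedded toroidal graph of order 3 (3 vertices, 6 edges,
3 faces, loopless), the Euler property implies the Angle property. -/
theorem order_three_euler_implies_angle {V E F : Type}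
    [Fintype V] [Fintype E] [Fintype F]
    [DecidableEq V] [DecidableEq E] [DecidableEq F]
    (G : TorusGraph 3 V E F) (hE : G.EulerProp) :
    G.AngleProp :=
  G.angleProp_of_card_lt_card_VJ fun _ => hE.card_lt_card_VJ
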